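/- arXiv:1305.2700 — 7 statements merged into one kernel-verified Lean document; each statement's English description precedes it below -/
import Mathlib

section
/- Fix integers m and j with 2 ≤ j ≤ m. For all integers s and t with 1 ≤ s < t ≤ m, the coefficients satisfy a_t - a_s ≥ t - s. -/
lemma stmt_2_step (m j : ℤ) (hj : 2 ≤ j) (hjm : j ≤ m)
    (a : ℤ → ℚ)
    (ha1 : a 1 = (j : ℚ) - 1)
    (ha2 : ∀ p, 2 ≤ p → p ≤ j → a p = (j : ℚ) + (p : ℚ) ^ 2 / 2 - 3 * (p : ℚ) / 2 + 1)
    (ha3 : ∀ p, j < p → p ≤ m →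
      a p = (j : ℚ) / 2 - (j : ℚ) ^ 2 / 2 + (p : ℚ) * (j : ℚ) - (p : ℚ) + 1) :
    ∀ p : ℤ, 1 ≤ p → p < m → a (p + 1) - a p ≥ 1 := by
  intro p hp1 hpm
  have hjq : (2 : ℚ) ≤ (j : ℚ) := by exact_mod_cast hj
  rcases eq_or_lt_of_le hp1 with h1 | h2
  · -- p = 1
    subst h1
    rw [show ((1 : ℤ) + 1) = 2 by ring, ha2 2 le_rfl hj, ha1]
    push_cast
    linarith
  · have hp2 : 2 ≤ p := h2
    have hpq : (2 : ℚ) ≤ (p : ℚ) := by exact_mod_cast hp2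
    rcases le_or_gt (p + 1) j with hle | hgt
    · -- both in quadratic region
      rw [ha2 (p + 1) (by linarith) hle, ha2 p hp2 (by linarith)]
      push_cast
      nlinarith
    · rcases le_or_gt p j with hpj | hpj
      · -- p = j
        have hpj' : p = j := le_antisymm hpj (by linarith)
        rw [ha3 (p + 1) (by linarith) (by linarith), ha2 p hp2 hpj, hpj']
        push_cast
        nlinarith
      · -- both in linear region
        rw [ha3 (p + 1) (by linarith) (by linarith), ha3 p hpj (by linarith)]
        have hpjq : (j : ℚ) < (p : ℚ) := by exact_mod_cast hpj
        push_cast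
        nlinarith

/-- Proposition 2.2(ii), first part: for `1 ≤ s < t ≤ m`, `a t - a s ≥ t - s`. -/
theorem stmt_2 (m j : ℤ) (hj : 2 ≤ j) (hjm : j ≤ m)
    (a : ℤ → ℚ)
    (ha1 : a 1 = (j : ℚ) - 1)
    (ha2 : ∀ p, 2 ≤ p → p ≤ j → a p = (j : ℚ) + (p : ℚ) ^ 2 / 2 - 3 * (p : ℚ) / 2 + 1)
    (ha3 : ∀ p, j < p → p ≤ m →
      a p = (j : ℚ) / 2 - (j : ℚ) ^ 2 / 2 + (p : ℚ) * (j : ℚ) - (p : ℚ) + 1) :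
    ∀ s t : ℤ, 1 ≤ s → s < t → t ≤ m → a t - a s ≥ (t : ℚ) - (s : ℚ) := by
  intro s t hs hst htm
  have step := stmt_2_step m j hj hjm a ha1 ha2 ha3
  have H : ∀ n : ℤ, s + 1 ≤ n → (n ≤ m → a n - a s ≥ (n : ℚ) - (s : ℚ)) := by
    refine Int.le_induction ?_ ?_
    · intro hm
      have := step s hs (by linarith)
      push_cast
      linarith
    · intro n hn ih hm
      have h1 := step n (by linarith) (by linarith)
      have h2 := ih (by linarith)
      push_cast
      push_cast at h2
      linarith
  exact H t (by linarith) htm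
end

section
/- Fix integers m and j with 2 ≤ j ≤ m. For all integers s and t with 1 ≤ s < t ≤ m, if t > j then a_t - a_s ≥ j - 1. -/
/-- Proposition 2.2(ii): for `1 ≤ s < t ≤ m` with `t > j`, `a t - a s ≥ j - 1`. -/
theorem stmt_3 (m j : ℤ) (hj : 2 ≤ j) (hjm : j ≤ m)
    (a : ℤ → ℚ)
    (ha1 : a 1 = (j : ℚ) - 1)
    (ha2 : ∀ p, 2 ≤ p → p ≤ j → a p = (j : ℚ) + (p : ℚ) ^ 2 / 2 - 3 * (p : ℚ) / 2 + 1)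
    (ha3 : ∀ p, j < p → p ≤ m →
      a p = (j : ℚ) / 2 - (j : ℚ) ^ 2 / 2 + (p : ℚ) * (j : ℚ) - (p : ℚ) + 1) :
    ∀ s t : ℤ, 1 ≤ s → s < t → t ≤ m → j < t → a t - a s ≥ (j : ℚ) - 1 := by
  intro s t hs hst htm hjt
  have hjQ : (2 : ℚ) ≤ (j : ℚ) := by exact_mod_cast hj
  have htQ : (j : ℚ) + 1 ≤ (t : ℚ) := by exact_mod_cast hjt
  rw [ha3 t hjt htm]
  rcases eq_or_lt_of_le hs with h1 | h2
  · rw [← h1, ha1]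
    nlinarith [sq_nonneg ((j:ℚ) - 2)]
  · have h2' : (2 : ℤ) ≤ s := h2
    rcases le_or_gt s j with hsj | hjs
    · rw [ha2 s h2' hsj]
      have hsQ : (2 : ℚ) ≤ (s : ℚ) := by exact_mod_cast h2'
      have hsjQ : (s : ℚ) ≤ (j : ℚ) := by exact_mod_cast hsj
      nlinarith [mul_nonneg (sub_nonneg.2 hsjQ) (by linarith : (0:ℚ) ≤ (j:ℚ) + (s:ℚ) - 3)]
    · rw [ha3 s hjs (le_trans (le_of_lt hst) htm)]
      have hstQ : (s : ℚ) + 1 ≤ (t : ℚ) := by exact_mod_cast hst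
      nlinarith [hstQ, hjQ]
end

section
/- Fix integers m and j with 2 ≤ j ≤ m. For all integers s and t with 1 ≤ s < t ≤ m, if t ≤ j then a_t - a_s ≥ t - 2. -/
/-- Proposition 2.2(ii): for `1 ≤ s < t ≤ m` with `t ≤ j`, `a t - a s ≥ t - 2`. -/
theorem stmt_4 (m j : ℤ) (hj : 2 ≤ j) (hjm : j ≤ m)
    (a : ℤ → ℚ)
    (ha1 : a 1 = (j : ℚ) - 1)
    (ha2 : ∀ p, 2 ≤ p → p ≤ j → a p = (j : ℚ) + (p : ℚ) ^ 2 / 2 - 3 * (p : ℚ) / 2 + 1)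
    (ha3 : ∀ p, j < p → p ≤ m →
      a p = (j : ℚ) / 2 - (j : ℚ) ^ 2 / 2 + (p : ℚ) * (j : ℚ) - (p : ℚ) + 1) :
    ∀ s t : ℤ, 1 ≤ s → s < t → t ≤ m → t ≤ j → a t - a s ≥ (t : ℚ) - 2 := by
  intro s t hs hst htm htj
  have ht2 : (2:ℤ) ≤ t := by omega
  rw [ha2 t ht2 htj]
  rcases eq_or_lt_of_le hs with h1 | h2
  · rw [← h1, ha1]
    push_cast [← h1]
    have : (2:ℚ) ≤ (t:ℚ) := by exact_mod_cast ht2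
    nlinarith [sq_nonneg ((t:ℚ) - 5/2)]
  · have hs2 : (2:ℤ) ≤ s := by omega
    rw [ha2 s hs2 (by omega)]
    have hx : (0:ℚ) ≤ (t:ℚ) - (s:ℚ) - 1 := by
      have : s + 1 ≤ t := by omega
      have : ((s:ℚ)+1 ≤ (t:ℚ)) := by exact_mod_cast this
      linarith
    have hy : (0:ℚ) ≤ (s:ℚ) - 2 := by
      have : ((2:ℚ) ≤ (s:ℚ)) := by exact_mod_cast hs2
      linarith
    nlinarith [mul_nonneg hx hy, sq_nonneg ((t:ℚ) - (s:ℚ) - 1), hx]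
end

section
/- Fix integers m and j with 2 ≤ j ≤ m. For every integer p with 2 ≤ p ≤ m, the coefficient a_p satisfies a_p ≥ max{j, p}. -/
/-- Proposition 2.2(iii): for `2 ≤ p ≤ m`, `a p ≥ max {j, p}`. -/
theorem stmt_5 (m j : ℤ) (hj : 2 ≤ j) (hjm : j ≤ m)
    (a : ℤ → ℚ)
    (ha1 : a 1 = (j : ℚ) - 1)
    (ha2 : ∀ p, 2 ≤ p → p ≤ j → a p = (j : ℚ) + (p : ℚ) ^ 2 / 2 - 3 * (p : ℚ) / 2 + 1)
    (ha3 : ∀ p, j < p → p ≤ m →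
      a p = (j : ℚ) / 2 - (j : ℚ) ^ 2 / 2 + (p : ℚ) * (j : ℚ) - (p : ℚ) + 1) :
    ∀ p : ℤ, 2 ≤ p → p ≤ m → a p ≥ max (j : ℚ) (p : ℚ) := by
  intro p hp2 hpm
  have hjq : (2 : ℚ) ≤ (j : ℚ) := by exact_mod_cast hj
  have hpq : (2 : ℚ) ≤ (p : ℚ) := by exact_mod_cast hp2
  rcases le_or_gt p j with h | h
  · have hpj : (p : ℚ) ≤ (j : ℚ) := by exact_mod_cast h
    rw [ha2 p hp2 h, max_eq_left hpj]
    nlinarith [sq_nonneg ((p : ℚ) - 2)]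
  · have hjp : (j : ℚ) ≤ (p : ℚ) := by exact_mod_cast h.le
    rw [ha3 p h hpm, max_eq_right hjp]
    nlinarith [mul_nonneg (by linarith : (0:ℚ) ≤ (j:ℚ) - 2) (by linarith : (0:ℚ) ≤ (p:ℚ) - (j:ℚ))]
end

section
/- Let m ≥ 2 be an integer and let ℓ_1 and u_2, ..., u_m be nonnegative reals satisfying ℓ_1 - Σ_{p=2}^{m} (p²/2 - 3p/2 + 1)·u_p ≥ 0. Then for every integer j with 1 ≤ j ≤ m, j·(Σ_{p=2}^{m} u_p + ℓ_1) ≥ Σ_{p=2}^{j} (j + p²/2 - 3p/2 + 1)·u_p + Σ_{p=j+1}^{m} (j/2 - j²/2 + p·j - p + 1)·u_p + (j-1)·ℓ_1 (empty sums are 0). -/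
/-- Equation (4') in the proof of Theorem 3.1: the constant function `f ≡ χ(G)`
satisfies condition (R1). -/
theorem stmt_9 (m : ℕ) (hm : 2 ≤ m) (ℓ₁ : ℝ) (u : ℕ → ℝ)
    (hℓ₁ : 0 ≤ ℓ₁) (hu : ∀ p, 0 ≤ u p)
    (h : ℓ₁ - ∑ p ∈ Finset.Icc 2 m,
        ((p : ℝ) ^ 2 / 2 - 3 * (p : ℝ) / 2 + 1) * u p ≥ 0) :
    ∀ j : ℕ, 1 ≤ j → j ≤ m →
      (j : ℝ) * ((∑ p ∈ Finset.Icc 2 m, u p) + ℓ₁) ≥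
        (∑ p ∈ Finset.Icc 2 j,
          ((j : ℝ) + (p : ℝ) ^ 2 / 2 - 3 * (p : ℝ) / 2 + 1) * u p) +
        (∑ p ∈ Finset.Icc (j + 1) m,
          ((j : ℝ) / 2 - (j : ℝ) ^ 2 / 2 + (p : ℝ) * (j : ℝ) - (p : ℝ) + 1) * u p) +
        ((j : ℝ) - 1) * ℓ₁ := by
  intro j hj hjm
  have hIcc : ∀ n : ℕ, Finset.Icc (n + 1) m = Finset.Ioc n m := fun n =>
    Finset.Icc_add_one_left_eq_Ioc n m
  have h2m : Finset.Icc 2 m = Finset.Ioc 1 m := hIcc 1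
  have h2j : Finset.Icc 2 j = Finset.Ioc 1 j := Finset.Icc_add_one_left_eq_Ioc 1 j
  rw [h2m] at h
  rw [h2m, h2j, hIcc j]
  have hsplit : ∀ f : ℕ → ℝ,
      ∑ p ∈ Finset.Ioc 1 j, f p + ∑ p ∈ Finset.Ioc j m, f p
        = ∑ p ∈ Finset.Ioc 1 m, f p := fun f =>
    Finset.sum_Ioc_consecutive f hj hjm
  have key : ∑ p ∈ Finset.Ioc j m,
      ((j : ℝ) / 2 - (j : ℝ) ^ 2 / 2 + (p : ℝ) * (j : ℝ) - (p : ℝ) + 1) * u p ≤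
      ∑ p ∈ Finset.Ioc j m,
      (((p : ℝ) ^ 2 / 2 - 3 * (p : ℝ) / 2 + 1) + (j : ℝ)) * u p := by
    apply Finset.sum_le_sum
    intro p hp
    have hpj : j < p := (Finset.mem_Ioc.mp hp).1
    have hpj' : (j : ℝ) + 1 ≤ (p : ℝ) := by exact_mod_cast hpj
    have hu' := hu p
    nlinarith [mul_nonneg (mul_nonneg (by linarith : (0:ℝ) ≤ (p:ℝ) - (j:ℝ) - 1)
      (by linarith : (0:ℝ) ≤ (p:ℝ) - (j:ℝ))) hu']
  have e1 : ∑ p ∈ Finset.Ioc 1 j, u p + ∑ p ∈ Finset.Ioc j m, u p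
      = ∑ p ∈ Finset.Ioc 1 m, u p := hsplit _
  have e2 : ∑ p ∈ Finset.Ioc 1 j, ((p : ℝ) ^ 2 / 2 - 3 * (p : ℝ) / 2 + 1) * u p
      + ∑ p ∈ Finset.Ioc j m, ((p : ℝ) ^ 2 / 2 - 3 * (p : ℝ) / 2 + 1) * u p
      = ∑ p ∈ Finset.Ioc 1 m, ((p : ℝ) ^ 2 / 2 - 3 * (p : ℝ) / 2 + 1) * u p := hsplit _
  have e3 : ∑ p ∈ Finset.Ioc 1 j,
      ((j : ℝ) + (p : ℝ) ^ 2 / 2 - 3 * (p : ℝ) / 2 + 1) * u p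
      = (j : ℝ) * ∑ p ∈ Finset.Ioc 1 j, u p +
        ∑ p ∈ Finset.Ioc 1 j, ((p : ℝ) ^ 2 / 2 - 3 * (p : ℝ) / 2 + 1) * u p := by
    rw [Finset.mul_sum, ← Finset.sum_add_distrib]
    exact Finset.sum_congr rfl fun p _ => by ring
  have e4 : ∑ p ∈ Finset.Ioc j m,
      (((p : ℝ) ^ 2 / 2 - 3 * (p : ℝ) / 2 + 1) + (j : ℝ)) * u p
      = ∑ p ∈ Finset.Ioc j m, ((p : ℝ) ^ 2 / 2 - 3 * (p : ℝ) / 2 + 1) * u p +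
        (j : ℝ) * ∑ p ∈ Finset.Ioc j m, u p := by
    rw [Finset.mul_sum, ← Finset.sum_add_distrib]
    exact Finset.sum_congr rfl fun p _ => by ring
  have e5 : (j : ℝ) * (∑ p ∈ Finset.Ioc 1 j, u p + ∑ p ∈ Finset.Ioc j m, u p)
      = (j : ℝ) * ∑ p ∈ Finset.Ioc 1 m, u p := by rw [e1]
  linarith [key, e2, e3, e4, e5, h]
end

section
/- For all integers m and p with m ≥ 2 and 2 ≤ p ≤ m, one has (p·(m²-3m+4) - (m²-m+2))/(2m-2) - (p²/2 - 3p/2 + 1) ≥ 0 (as rational numbers; note 2m-2 > 0 and m²-3m+4 > 0 for m ≥ 2). -/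
/-! The difference factors as `(m - p) * ((m - 1) * p - (m + 1)) / (2 * (m - 1))`. The first factor
vanishes at `p = m`, and for `p < m` integrality gives `p + 1 ≤ m`, so the second factor is at least
`m - 3 ≥ 0`. -/

theorem coeff_gap_eq {K : Type*} [Field K] [NeZero (2 : K)] (m p : K) (hm : m ≠ 1) :
    (p * (m ^ 2 - 3 * m + 4) - (m ^ 2 - m + 2)) / (2 * m - 2) - (p ^ 2 / 2 - 3 * p / 2 + 1) =
      (m - p) * ((m - 1) * p - (m + 1)) / (2 * m - 2) := by
  have : m - 1 ≠ 0 := sub_ne_zero.2 hm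
  field_simp
  ring

theorem sub_mul_sub_nonneg_of_two_le_of_le {m p : ℤ} (hp : 2 ≤ p) (hpm : p ≤ m) :
    0 ≤ (m - p) * ((m - 1) * p - (m + 1)) := by
  rcases hpm.eq_or_lt with rfl | hlt
  · simp
  · exact mul_nonneg (by linarith) (by nlinarith)

theorem stmt_11_general (m p : ℤ) (hp : 2 ≤ p) (hpm : p ≤ m) :
    ((p : ℚ) * ((m : ℚ) ^ 2 - 3 * (m : ℚ) + 4) - ((m : ℚ) ^ 2 - (m : ℚ) + 2)) /
        (2 * (m : ℚ) - 2) -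
      ((p : ℚ) ^ 2 / 2 - 3 * (p : ℚ) / 2 + 1) ≥ 0 := by
  have hm : (2 : ℚ) ≤ m := by exact_mod_cast hp.trans hpm
  rw [ge_iff_le, coeff_gap_eq _ _ (by linarith : (1 : ℚ) < m).ne']
  refine div_nonneg ?_ (by linarith)
  exact_mod_cast sub_mul_sub_nonneg_of_two_le_of_le hp hpm

/-- Inequality (5) in the proof of Corollary 3.3. -/
theorem stmt_11 (m p : ℤ) (hm : 2 ≤ m) (hp : 2 ≤ p) (hpm : p ≤ m) :
    ((p : ℚ) * ((m : ℚ) ^ 2 - 3 * (m : ℚ) + 4) - ((m : ℚ) ^ 2 - (m : ℚ) + 2)) /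
        (2 * (m : ℚ) - 2) -
      ((p : ℚ) ^ 2 / 2 - 3 * (p : ℚ) / 2 + 1) ≥ 0 :=
  stmt_11_general m p hp hpm
end

section
/- Let m ≥ 3 and k ≥ 1 be integers. Then for every integer j with 1 ≤ j ≤ m, the real inequality j·(m + 1/2 - √(2m-2))·k ≥ A_j·k holds, where A_j = j/2 - j²/2 + m·j - m + 1 for 1 ≤ j ≤ m-1 and A_m = m + m²/2 - 3m/2 + 1. -/
/-- Verification of condition (R1) for `K_{m⋆k}` with the constant function
`f ≡ (m + 1/2 - √(2m-2))·k`, used in Corollary 3.4. -/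
theorem stmt_13 (m k : ℤ) (hm : 3 ≤ m) (hk : 1 ≤ k)
    (A : ℤ → ℝ)
    (hA1 : ∀ j, 1 ≤ j → j ≤ m - 1 →
      A j = (j : ℝ) / 2 - (j : ℝ) ^ 2 / 2 + (m : ℝ) * (j : ℝ) - (m : ℝ) + 1)
    (hA2 : A m = (m : ℝ) + (m : ℝ) ^ 2 / 2 - 3 * (m : ℝ) / 2 + 1) :
    ∀ j : ℤ, 1 ≤ j → j ≤ m →
      (j : ℝ) * ((m : ℝ) + 1 / 2 - Real.sqrt (2 * (m : ℝ) - 2)) * (k : ℝ) ≥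
        A j * (k : ℝ) := by
  intro j hj1 hjm
  have hmR : (3 : ℝ) ≤ (m : ℝ) := by exact_mod_cast hm
  have hkR : (1 : ℝ) ≤ (k : ℝ) := by exact_mod_cast hk
  have hjR : (1 : ℝ) ≤ (j : ℝ) := by exact_mod_cast hj1
  set s := Real.sqrt (2 * (m : ℝ) - 2) with hs
  have hs0 : 0 ≤ s := Real.sqrt_nonneg _
  have hs2 : s ^ 2 = 2 * (m : ℝ) - 2 := Real.sq_sqrt (by linarith)
  have key : (j : ℝ) * s ≤ (j : ℝ) ^ 2 / 2 + (m : ℝ) - 1 := by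
    nlinarith [sq_nonneg ((j : ℝ) - s)]
  rcases eq_or_lt_of_le hjm with h | h
  · subst h
    rw [hA2]
    nlinarith [mul_le_mul_of_nonneg_right key (by linarith : (0:ℝ) ≤ (k:ℝ))]
  · have hj' : j ≤ m - 1 := by omega
    rw [hA1 j hj1 hj']
    nlinarith [mul_le_mul_of_nonneg_right key (by linarith : (0:ℝ) ≤ (k:ℝ))]
end
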